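/- Let Q be a better-quasi-order. Every Borel conciliatory function A: ω̂^ω → Q is σ-join-irreducible (viewing A as a function on ω^ω via a homeomorphism between ω̂^ω and ω^ω). -/

import Mathlib

/-!
Common definitions for formalizing "On the structure of the Wadge degrees of bqo-valued
Borel functions" by Kihara and Montalbán.
-/

open scoped Classical
noncomputable section

namespace WadgeStudy

/-! ### Baire space `ω^ω` -/

/-- Baire space `ω^ω`: the product of countably many copies of discrete `ω`. -/
abbrev Baire : Type := ℕ → ℕ

/-- The basic clopen set `[σ]` of all infinite sequences extending the finite string `σ`. -/
def cylB (σ : List ℕ) : Set Baire := {X | ∀ i : Fin σ.length, X i = σ.get i}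

/-- The finite initial segment `X↾n` of `X ∈ ω^ω`. -/
def initSeg (X : Baire) (n : ℕ) : List ℕ := List.ofFn fun i : Fin n => X i

/-- Concatenation `σ⌢X` of a finite string and an infinite sequence. -/
def appendStr (σ : List ℕ) (X : Baire) : Baire := fun i =>
  if h : i < σ.length then σ.get ⟨i, h⟩ else X (i - σ.length)

/-! ### The Borel hierarchy -/

/-- The Borel hierarchy: `Σ⁰₁` sets are the open sets; for `α > 1`, a set is `Σ⁰_α` if it is
a countable union of sets each of which is `Π⁰_β` (i.e. has `Σ⁰_β` complement) for some
`β < α`. -/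
inductive SigmaZero (X : Type*) [TopologicalSpace X] : Ordinal.{0} → Set X → Prop
  | of_isOpen {s : Set X} : IsOpen s → SigmaZero X 1 s
  | iUnion {α : Ordinal} (hα : 1 < α) (f : ℕ → Set X) (β : ℕ → Ordinal)
      (hβ : ∀ n, β n < α) (hf : ∀ n, SigmaZero X (β n) (f n)ᶜ) :
      SigmaZero X α (⋃ n, f n)

/-- `Π⁰_α` sets are the complements of `Σ⁰_α` sets. -/
def PiZero (X : Type*) [TopologicalSpace X] (α : Ordinal.{0}) (s : Set X) : Prop :=
  SigmaZero X α sᶜ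

/-- `Δ⁰_α = Σ⁰_α ∩ Π⁰_α`. -/
def DeltaZero (X : Type*) [TopologicalSpace X] (α : Ordinal.{0}) (s : Set X) : Prop :=
  SigmaZero X α s ∧ PiZero X α s

/-- A countable ordinal. -/
def IsCountableOrd (ξ : Ordinal.{0}) : Prop := ξ.card ≤ Cardinal.aleph0

/-- `A : X → Q` (with `Q` carrying the discrete topology) is `Δ⁰_ξ`-measurable iff its range is
countable and every fiber is `Δ⁰_ξ`. -/
def DeltaMeasurable {X : Type*} [TopologicalSpace X] {Q : Type*} (ξ : Ordinal.{0}) (A : X → Q) :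
    Prop :=
  (Set.range A).Countable ∧ ∀ q : Q, DeltaZero X ξ (A ⁻¹' {q})

/-- A function into Baire space is `Σ⁰_ξ`-measurable if the preimage of every basic clopen set
is `Σ⁰_ξ`. -/
def SigmaMeasurable {X : Type*} [TopologicalSpace X] (ξ : Ordinal.{0}) (D : X → Baire) : Prop :=
  ∀ σ : List ℕ, SigmaZero X ξ (D ⁻¹' cylB σ)

/-- A `Q`-valued function is Borel if it is `Δ⁰_ξ`-measurable for some countable ordinal `ξ`. -/
def BorelMeasurable {X : Type*} [TopologicalSpace X] {Q : Type*} (A : X → Q) : Prop :=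
  ∃ ξ : Ordinal.{0}, IsCountableOrd ξ ∧ DeltaMeasurable ξ A

/-! ### Wadge reducibility of `Q`-valued functions -/

/-- `Q`-Wadge reducibility: `A ≤_w B` iff there is a continuous `θ` from the domain of `A` to
the domain of `B` with `A X ≤_Q B (θ X)` for all `X`. -/
def WadgeLE {X Y : Type*} [TopologicalSpace X] [TopologicalSpace Y] {Q : Type*} [Preorder Q]
    (A : X → Q) (B : Y → Q) : Prop :=
  ∃ θ : X → Y, Continuous θ ∧ ∀ x, A x ≤ B (θ x)

/-- `Q`-Wadge equivalence. -/
def WadgeEquiv {X Y : Type*} [TopologicalSpace X] [TopologicalSpace Y] {Q : Type*} [Preorder Q]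
    (A : X → Q) (B : Y → Q) : Prop :=
  WadgeLE A B ∧ WadgeLE B A

/-- `A` is self-dual if there is a continuous `θ` with `A (θ X) ≰_Q A X` for all `X`. -/
def SelfDual {Q : Type*} [Preorder Q] (A : Baire → Q) : Prop :=
  ∃ θ : Baire → Baire, Continuous θ ∧ ∀ X, ¬ A (θ X) ≤ A X

/-- The function `A↾[σ] : X ↦ A (σ⌢X)`. -/
def restrictCyl {Q : Type*} (A : Baire → Q) (σ : List ℕ) : Baire → Q :=
  fun X => A (appendStr σ X)

/-- `A` is initializable if `A ≤_w A↾[σ]` for every finite string `σ`. -/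
def Initializable {Q : Type*} [Preorder Q] (A : Baire → Q) : Prop :=
  ∀ σ : List ℕ, WadgeLE A (restrictCyl A σ)

/-- `F(A) = {X : ∀ n, A↾[X↾n] ≡_w A}`. -/
def FSet {Q : Type*} [Preorder Q] (A : Baire → Q) : Set Baire :=
  {X | ∀ n : ℕ, WadgeEquiv (restrictCyl A (initSeg X n)) A}

/-- The countable join `⊕_n A_n`, defined by `(⊕_n A_n)(n⌢X) = A_n X`. -/
def oplus {Q : Type*} (A : ℕ → Baire → Q) : Baire → Q :=
  fun X => A (X 0) fun n => X (n + 1)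

/-- A Borel function `A` is σ-join-reducible if its `Q`-Wadge degree is the least upper bound
of a countable collection of `Q`-Wadge degrees (of Borel functions) each strictly below it. -/
def SigmaJoinReducible {Q : Type*} [Preorder Q] (A : Baire → Q) : Prop :=
  ∃ B : ℕ → Baire → Q,
    (∀ n, BorelMeasurable (B n)) ∧
    (∀ n, WadgeLE (B n) A ∧ ¬ WadgeLE A (B n)) ∧
    ∀ C : Baire → Q, BorelMeasurable C → (∀ n, WadgeLE (B n) C) → WadgeLE A C

/-! ### Better quasi-orders -/

/-- Removing the first entry of a strictly increasing sequence. -/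
def dropMin (X : {X : Baire // StrictMono X}) : {X : Baire // StrictMono X} :=
  ⟨fun n => X.1 (n + 1), fun _ _ h => X.2 (Nat.add_lt_add_right h 1)⟩

/-- A quasi-order `Q` is a better-quasi-order if for every continuous `f : [ω]^ω → Q` (where
`Q` is discrete and `[ω]^ω ⊆ ω^ω` is the subspace of strictly increasing sequences) there is
`X` with `f X ≤_Q f X⁻`. -/
def IsBQO (Q : Type*) [Preorder Q] : Prop :=
  ∀ f : {X : Baire // StrictMono X} → Q,
    @Continuous _ _ _ ⊥ f → ∃ X, f X ≤ f (dropMin X)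

/-! ### Terms: nested labeled trees and forests -/

/-- `L(Q)`-terms: constants `q ∈ Q`, labelings `⟨T⟩^{ω^α}` (with `⟨T⟩ = ⟨T⟩^{ω^0}`),
trees `B → ⊔_i F_i`, and countable disjoint unions `⊔_i F_i`. -/
inductive Term (Q : Type u) : Type (max u 1)
  | const : Q → Term Q
  | jump : Ordinal.{0} → Term Q → Term Q
  | node : Term Q → (ℕ → Term Q) → Term Q
  | sup : (ℕ → Term Q) → Term Q

/-- `⟨⟩`-type (base) terms: constants and labelings. -/
def IsBase {Q : Type u} : Term Q → Prop
  | Term.const _ => True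
  | Term.jump _ _ => True
  | _ => False

/-- A rank function on terms, used to define the quasi-order `⊴` by recursion. -/
def rk {Q : Type u} : Term Q → Ordinal.{0}
  | .const _ => 0
  | .jump _ T => rk T + 1
  | .node B F => max (rk B) (Ordinal.lsub fun i => rk (F i)) + 1
  | .sup F => Ordinal.lsub (fun i => rk (F i)) + 1

theorem ord_lt_add_one (a : Ordinal.{0}) : a < a + 1 := by
  rw [Ordinal.add_one_eq_succ]; exact Order.lt_succ a

theorem rk_lt_jump {Q : Type u} (α : Ordinal.{0}) (T : Term Q) : rk T < rk (.jump α T) :=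
  ord_lt_add_one (rk T)

theorem rk_base_lt_node {Q : Type u} (B : Term Q) (F : ℕ → Term Q) :
    rk B < rk (.node B F) :=
  lt_of_le_of_lt (le_max_left _ _) (ord_lt_add_one _)

theorem rk_child_lt_node {Q : Type u} (B : Term Q) (F : ℕ → Term Q) (i : ℕ) :
    rk (F i) < rk (.node B F) :=
  lt_of_lt_of_le (Ordinal.lt_lsub _ i) (le_trans (le_max_right _ _) (le_of_lt (ord_lt_add_one _)))

theorem rk_child_lt_sup {Q : Type u} (F : ℕ → Term Q) (i : ℕ) :
    rk (F i) < rk (.sup F) :=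
  lt_of_lt_of_le (Ordinal.lt_lsub _ i) (le_of_lt (ord_lt_add_one _))

/-- The quasi-order `⊴` on terms, defined by simultaneous recursion.  A constant `q` is
identified with `⟨q⟩` (so a constant compares with a labeled term by unravelling the label)
and a `⟨⟩`-type term `B` is identified with `B → (empty forest)`, the empty forest being
`⊴`-below everything.  The clauses are:
* `p ⊴ q` iff `p ≤_Q q`;
* `⟨U⟩^{ω^α} ⊴ ⟨V⟩^{ω^β}` iff `U ⊴ V` when `α = β`, iff `⟨U⟩^{ω^α} ⊴ V` when `α > β`, and
  iff `U ⊴ ⟨V⟩^{ω^β}` when `α < β`;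
* for `S = B→⊔_i S_i` and `T = C→⊔_j T_j`: `S ⊴ T` iff either (`B ⊴ C` and `S_i ⊴ T` for
  all `i`), or (`B ⋬ C` and `S ⊴ T_j` for some `j`);
* `⊔` is interpreted as countable supremum: `⊔_i S_i ⊴ ⊔_j T_j` iff every `S_i` is `⊴` some
  `T_j`. -/
def TermLE {Q : Type u} [Preorder Q] : Term Q → Term Q → Prop
  | .const p, .const q => p ≤ q
  | .const p, .jump _ V => TermLE (.const p) V
  | .const p, .node C G =>
      (TermLE (.const p) C) ∨ (¬ TermLE (.const p) C ∧ ∃ j, TermLE (.const p) (G j))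
  | .const p, .sup G => ∃ j, TermLE (.const p) (G j)
  | .jump _ U, .const q => TermLE U (.const q)
  | .jump α U, .jump β V =>
      if α = β then TermLE U V
      else if β < α then TermLE (.jump α U) V
      else TermLE U (.jump β V)
  | .jump α U, .node C G =>
      (TermLE (.jump α U) C) ∨ (¬ TermLE (.jump α U) C ∧ ∃ j, TermLE (.jump α U) (G j))
  | .jump α U, .sup G => ∃ j, TermLE (.jump α U) (G j)
  | .node B F, .const q => TermLE B (.const q) ∧ ∀ i, TermLE (F i) (.const q)
  | .node B F, .jump β V => TermLE B (.jump β V) ∧ ∀ i, TermLE (F i) (.jump β V)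
  | .node B F, .node C G =>
      (TermLE B C ∧ ∀ i, TermLE (F i) (.node C G)) ∨
      (¬ TermLE B C ∧ ∃ j, TermLE (.node B F) (G j))
  | .node B F, .sup G => ∃ j, TermLE (.node B F) (G j)
  | .sup F, .const q => ∀ i, TermLE (F i) (.const q)
  | .sup F, .jump β V => ∀ i, TermLE (F i) (.jump β V)
  | .sup F, .node C G => ∀ i, TermLE (F i) (.node C G)
  | .sup F, .sup G => ∀ i, ∃ j, TermLE (F i) (G j)
termination_by S T => (rk S, rk T)
decreasing_by
  all_goals
    first
      | exact Prod.Lex.left _ _ (rk_lt_jump _ _)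
      | exact Prod.Lex.left _ _ (rk_base_lt_node _ _)
      | exact Prod.Lex.left _ _ (rk_child_lt_node _ _ _)
      | exact Prod.Lex.left _ _ (rk_child_lt_sup _ _)
      | exact Prod.Lex.right _ (rk_lt_jump _ _)
      | exact Prod.Lex.right _ (rk_base_lt_node _ _)
      | exact Prod.Lex.right _ (rk_child_lt_node _ _ _)
      | exact Prod.Lex.right _ (rk_child_lt_sup _ _)

/-- `S ≡ T`: `S ⊴ T` and `T ⊴ S`. -/
def TermEquiv {Q : Type u} [Preorder Q] (S T : Term Q) : Prop := TermLE S T ∧ TermLE T S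

/-- `Tree^n(Q)` for finite `n`: `Tree⁰(Q) = Q` and `Tree^{n+1}(Q) = Tree(Tree^n(Q))`, where
`Tree(Q')` consists of the one point trees `⟨q'⟩` and the trees `⟨q'⟩ → ⊔_i T_i` for
`q' ∈ Q'` and trees `T_i ∈ Tree(Q')`. -/
inductive IsTreeN {Q : Type u} : ℕ → Term Q → Prop
  | const (q : Q) : IsTreeN 0 (.const q)
  | leaf {n : ℕ} {T : Term Q} : IsTreeN n T → IsTreeN (n + 1) (.jump 0 T)
  | node {n : ℕ} {T : Term Q} {F : ℕ → Term Q} :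
      IsTreeN n T → (∀ i, IsTreeN (n + 1) (F i)) → IsTreeN (n + 1) (.node (.jump 0 T) F)

/-- `⊔Tree^n(Q)`: trees in `Tree^n(Q)` and countable disjoint unions of such trees. -/
def IsForestN {Q : Type u} (n : ℕ) (T : Term Q) : Prop :=
  IsTreeN n T ∨ ∃ F : ℕ → Term Q, T = .sup F ∧ ∀ i, IsTreeN n (F i)

/-- The exponent `α` in the normal form `ξ = ω^α + β`, `β < ω^{α+1}`. -/
def olog (ξ : Ordinal.{0}) : Ordinal.{0} := Ordinal.log Ordinal.omega0 ξ

/-- The remainder `β` in the normal form `ξ = ω^α + β`, `β < ω^{α+1}`. -/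
def obeta (ξ : Ordinal.{0}) : Ordinal.{0} := ξ - Ordinal.omega0 ^ olog ξ

/-- `Tree^ξ(Q)` for an ordinal `ξ`: writing `ξ = ω^α + β` with `β < ω^{α+1}`, one has
`Tree^ξ(Q) = Tree^{ω^α}(⟨Tree^β(Q)⟩^{ω^α})` (with `Tree⁰(Q) = Q`), where `Tree^{ω^α}(Q')` is
generated from the constants `q' ∈ Q'` (which are `⟨⟩`-type) by the labelings `⟨T⟩^{ω^γ}` for
`γ < α` (also `⟨⟩`-type) and by `T → ⊔_i F_i` for `⟨⟩`-type `T` and trees `F_i`. -/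
inductive IsTreeXi {Q : Type u} : Ordinal.{0} → Term Q → Prop
  | const {ξ : Ordinal.{0}} (q : Q) (h : obeta ξ = 0) : IsTreeXi ξ (Term.const q)
  | atom {ξ : Ordinal.{0}} {S : Term Q} (h : obeta ξ ≠ 0) (hS : IsTreeXi (obeta ξ) S) :
      IsTreeXi ξ (Term.jump (olog ξ) S)
  | jump {ξ β : Ordinal.{0}} {T : Term Q} (h0 : ξ ≠ 0) (hβ : β < olog ξ) (hT : IsTreeXi ξ T) :
      IsTreeXi ξ (Term.jump β T)
  | node {ξ : Ordinal.{0}} {B : Term Q} {F : ℕ → Term Q} (h0 : ξ ≠ 0) (hB : IsTreeXi ξ B)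
      (hbase : IsBase B) (hF : ∀ i, IsTreeXi ξ (F i)) : IsTreeXi ξ (Term.node B F)

/-- `⊔Tree^ξ(Q)`: trees in `Tree^ξ(Q)` and countable disjoint unions of such trees. -/
def IsForestXi {Q : Type u} (ξ : Ordinal.{0}) (T : Term Q) : Prop :=
  IsTreeXi ξ T ∨ ∃ F : ℕ → Term Q, T = .sup F ∧ ∀ i, IsTreeXi ξ (F i)

/-- The `k`-fold labeling `⟨⟨…⟨T⟩…⟩⟩`. -/
def labelIter {Q : Type u} : ℕ → Term Q → Term Q
  | 0, T => T
  | k + 1, T => .jump 0 (labelIter k T)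

/-- `ι(T) = T[⟨q⟩^k / q]`: replace every occurrence of a constant `q` in `T` by `⟨q⟩^k`. -/
def iotaSubst {Q : Type u} (k : ℕ) : Term Q → Term Q
  | .const q => labelIter k (.const q)
  | .jump α T => .jump α (iotaSubst k T)
  | .node B F => .node (iotaSubst k B) fun i => iotaSubst k (F i)
  | .sup F => .sup fun i => iotaSubst k (F i)

/-! ### The pointclasses `Σ_T` -/

/-- `Σ⁰_ξ`-measurability of a Baire-space valued map on the subspace `D ⊆ ω^ω`. -/
def SigmaMeasurableOn (ξ : Ordinal.{0}) (D : Set Baire) (f : Baire → Baire) : Prop :=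
  ∀ σ : List ℕ, SigmaZero (↥D) ξ ((fun x : ↥D => f x.1) ⁻¹' cylB σ)

/-- The pointclass `Σ_T` of `Q`-valued functions associated to a term `T`, relativized to a
domain `D ⊆ ω^ω` (a function defined on a nonempty closed or open subset of `ω^ω` is
identified with the corresponding total function; `SigmaT T D A` expresses `A↾D ∈ Σ_T`):
* `Σ_q` consists only of the constant function `q`;
* `A ∈ Σ_{⊔_i S_i}` iff there is a partition of the domain into relatively clopen sets `C_i`
  with `A↾C_i ∈ Σ_{S_i}` for all `i`;
* `A ∈ Σ_{T→S}` (`S = ⊔_i F_i`) iff there is a relatively open set `V` with `A↾(D∖V) ∈ Σ_T`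
  and `A↾(D∩V) ∈ Σ_S`;
* `A ∈ Σ_{⟨T⟩^{ω^α}}` iff `A = B ∘ D'` for some `Σ⁰_{1+ω^α}`-measurable `D' : ω^ω → ω^ω` and
  some `B ∈ Σ_T` (for `α = 0` this is the clause for the jump `Σ_{⟨T⟩}`, with a
  `Σ⁰₂`-measurable `D'`). -/
inductive SigmaT {Q : Type u} : Term Q → Set Baire → (Baire → Q) → Prop
  | const (q : Q) (D : Set Baire) (A : Baire → Q) (h : ∀ x ∈ D, A x = q) :
      SigmaT (Term.const q) D A
  | sup (S : ℕ → Term Q) (D : Set Baire) (A : Baire → Q) (C : ℕ → Set Baire)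
      (hcl : ∀ i, IsClopen ((fun x : ↥D => x.1) ⁻¹' C i))
      (hpart : ∀ x ∈ D, ∃! i, x ∈ C i)
      (h : ∀ i, SigmaT (S i) (D ∩ C i) A) :
      SigmaT (Term.sup S) D A
  | node (B : Term Q) (F : ℕ → Term Q) (D : Set Baire) (A : Baire → Q) (V : Set Baire)
      (hV : IsOpen ((fun x : ↥D => x.1) ⁻¹' V))
      (h1 : SigmaT B (D \ V) A)
      (h2 : SigmaT (Term.sup F) (D ∩ V) A) :
      SigmaT (Term.node B F) D A
  | jump (α : Ordinal.{0}) (T : Term Q) (D : Set Baire) (A : Baire → Q)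
      (D' : Baire → Baire) (B : Baire → Q)
      (hD : SigmaMeasurableOn (1 + Ordinal.omega0 ^ α) D D')
      (hB : SigmaT T Set.univ B)
      (hA : ∀ x ∈ D, A x = B (D' x)) :
      SigmaT (Term.jump α T) D A

/-- A total function is in `Σ_T` if it is so on the whole space. -/
def MemSigmaT {Q : Type u} (T : Term Q) (A : Baire → Q) : Prop := SigmaT T Set.univ A

/-- `Ω` is `Σ_T`-complete: `Ω ∈ Σ_T` and every function in `Σ_T` is Wadge reducible to `Ω`. -/
def SigmaTComplete {Q : Type u} [Preorder Q] (T : Term Q) (Ω : Baire → Q) : Prop :=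
  MemSigmaT T Ω ∧ ∀ A : Baire → Q, MemSigmaT T A → WadgeLE A Ω

/-! ### `ω̂ = ω ∪ {pass}`, conciliatory functions -/

/-- `ω̂ = ω ∪ {pass}`; `none` plays the role of the symbol `pass`. -/
abbrev Hat : Type := Option ℕ

instance : TopologicalSpace Hat := ⊥
instance : DiscreteTopology Hat := ⟨rfl⟩
instance : TopologicalSpace (Option Hat) := ⊥
instance : DiscreteTopology (Option Hat) := ⟨rfl⟩

/-- `ω̂^ω`, with the product topology of the discrete space `ω̂`. -/
abbrev HatBaire : Type := ℕ → Hat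

/-- Basic clopen subsets of `ω̂^ω`. -/
def cylH (σ : List Hat) : Set HatBaire := {X | ∀ i : Fin σ.length, X i = σ.get i}

/-- The index of the `k`-th non-`pass` entry of `X ∈ ω̂^ω`, if it exists. -/
def nthSome (X : HatBaire) : ℕ → Option ℕ
  | 0 => if h : ∃ i, (X i).isSome then some (Nat.find h) else none
  | k + 1 =>
    match nthSome X k with
    | none => none
    | some i => if h : ∃ j, i < j ∧ (X j).isSome then some (Nat.find h) else none

theorem nthSome_isSome (X : HatBaire) : ∀ k i, nthSome X k = some i → (X i).isSome := by
  intro k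
  induction k with
  | zero =>
    intro i h
    simp only [nthSome] at h
    split at h
    · rename_i hex
      cases h
      exact Nat.find_spec hex
    · exact absurd h (by simp)
  | succ k ih =>
    intro i h
    simp only [nthSome] at h
    split at h
    · exact absurd h (by simp)
    · rename_i j hj
      split at h
      · rename_i hex
        cases h
        exact (Nat.find_spec hex).2
      · exact absurd h (by simp)

theorem nthSome_succ_none {X : HatBaire} {k : ℕ} (h : nthSome X k = none) :
    nthSome X (k + 1) = none := by
  simp only [nthSome, h]

/-- `X^p ∈ ω^{≤ω}`: the finite or infinite sequence obtained from `X ∈ ω̂^ω` by deleting all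
occurrences of `pass`. -/
def strip (X : HatBaire) : Stream'.Seq ℕ :=
  ⟨fun k => (nthSome X k).bind fun i => X i, by
    intro n h
    have hn : nthSome X n = none := by
      cases hh : nthSome X n with
      | none => rfl
      | some i =>
        exfalso
        have h1 := nthSome_isSome X n i hh
        replace h : (nthSome X n).bind (fun i => X i) = none := h
        rw [hh, Option.bind_some] at h
        rw [h] at h1
        simp at h1
    show (nthSome X (n + 1)).bind _ = none
    rw [nthSome_succ_none hn, Option.bind_none]⟩

/-- The natural inclusion `ω^ω ⊆ ω^{≤ω}`. -/
def ofBaire (X : Baire) : Stream'.Seq ℕ :=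
  ⟨fun n => some (X n), by intro n h; simp at h⟩

/-- The natural inclusion `ω^{<ω} ⊆ ω^{≤ω}`. -/
def ofList (σ : List ℕ) : Stream'.Seq ℕ := Stream'.Seq.ofList σ

/-- The initial segment (prefix) relation on `ω^{≤ω}`. -/
def SeqPrefix (σ τ : Stream'.Seq ℕ) : Prop :=
  ∀ n a, σ.get? n = some a → τ.get? n = some a

/-- A `Q`-valued function on `ω̂^ω` is conciliatory if its value depends only on the
pass-deleted input: `X^p = Y^p → A(X) = A(Y)`. -/
def ConciliatoryQ {Q : Type*} (A : HatBaire → Q) : Prop :=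
  ∀ X Y, strip X = strip Y → A X = A Y

/-- `Ψ : ω̂^ω → ω̂^ω` is conciliatory if `X^p = Y^p` implies `Ψ(X)^p = Ψ(Y)^p`. -/
def ConciliatoryF (Ψ : HatBaire → HatBaire) : Prop :=
  ∀ X Y, strip X = strip Y → strip (Ψ X) = strip (Ψ Y)

/-- `Ψ ≡_p Φ`: `Ψ(X)^p = Φ(X)^p` for all `X`. -/
def PEquiv (Ψ Φ : HatBaire → HatBaire) : Prop := ∀ X, strip (Ψ X) = strip (Φ X)

/-- `Σ⁰_ξ`-measurability for self-maps of `ω̂^ω`. -/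
def SigmaMeasurableH (ξ : Ordinal.{0}) (Ψ : HatBaire → HatBaire) : Prop :=
  ∀ σ : List Hat, SigmaZero HatBaire ξ (Ψ ⁻¹' cylH σ)

/-- A conciliatory `U` is `Σ⁰_ξ`-universal if it is `Σ⁰_ξ`-measurable and every
`Σ⁰_ξ`-measurable conciliatory `G` satisfies `G ≡_p U ∘ θ` for some continuous `θ`. -/
def SigmaUniversal (ξ : Ordinal.{0}) (U : HatBaire → HatBaire) : Prop :=
  SigmaMeasurableH ξ U ∧
    ∀ G : HatBaire → HatBaire, ConciliatoryF G → SigmaMeasurableH ξ G →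
      ∃ θ : HatBaire → HatBaire, Continuous θ ∧ PEquiv G (U ∘ θ)

/-- `Ψ` is initializable if for every `τ ∈ ω̂^{<ω}` there is a continuous `θ_τ : ω̂^ω → [τ]`
with `Ψ ≡_p Ψ ∘ θ_τ`. -/
def InitializableH (Ψ : HatBaire → HatBaire) : Prop :=
  ∀ τ : List Hat, ∃ θ : HatBaire → HatBaire,
    Continuous θ ∧ (∀ X, θ X ∈ cylH τ) ∧ PEquiv Ψ (Ψ ∘ θ)

/-! ### The mind-change coding -/

/-- `ω̂^{≤ω}`: finite or infinite sequences over `ω̂` (the value `none` of the outer `Option`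
means "beyond the length of the sequence"). -/
abbrev HatSeq : Type := {Y : ℕ → Option Hat // ∀ n, Y n = none → Y (n + 1) = none}

/-- The pass-deleted sequence `Y^p ∈ ω^{≤ω}` of `Y ∈ ω̂^{≤ω}`. -/
def stripHS (Y : HatSeq) : Stream'.Seq ℕ := strip fun n => (Y.1 n).join

/-- The mind-change coding `Y → Z` for `Y ∈ ω̂^{≤ω}` of length `ℓ` and `Z ∈ ω̂^ω`:
`(Y→Z)(n) = 2·Y(n)` if `n < ℓ` and `Y(n) ≠ pass`; `pass` if `n < ℓ` and `Y(n) = pass`;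
`2·Z(0)+1` if `n = ℓ`; and `Z(n−ℓ)` if `n > ℓ`.  When `Y` is infinite or `Z^p` is empty,
`Y→Z` is `Y` with each non-pass entry doubled (padded with passes). -/
def arrowSeq (Y : HatSeq) (Z : HatBaire) : HatBaire := fun n =>
  match Y.1 n with
  | some (some k) => some (2 * k)
  | some none => none
  | none =>
    if ∀ m, Z m = none then none
    else if n = sInf {m | Y.1 m = none} then (Z 0).map fun z => 2 * z + 1
    else Z (n - sInf {m | Y.1 m = none})

/-- The canonical `π₀`: the part of `X` before the first mind change, with all entries halved
(and passes from the first mind change on). -/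
def pi0 (X : HatBaire) : HatBaire := fun n =>
  if ∃ m ≤ n, ∃ k, X m = some (2 * k + 1) then none
  else (X n).map fun k => k / 2

/-- The canonical `π₁`: the decoded part of `X` from the first mind change on (and all passes
if no mind change ever occurs). -/
def pi1 (X : HatBaire) : HatBaire := fun n =>
  if ∃ m, ∃ k, X m = some (2 * k + 1) then
    if n = 0 then (X (sInf {m | ∃ k, X m = some (2 * k + 1)})).map fun k => k / 2
    else X (sInf {m | ∃ k, X m = some (2 * k + 1)} + n)
  else none

/-- The mind-change operation on functions:
`(A→B)(X) = A(π₀ X)` if `π₁(X)^p` is empty, and `B(π₁ X)` otherwise. -/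
def mcArrow {Q : Type*} (A B : HatBaire → Q) : HatBaire → Q := fun X =>
  if ∀ n, pi1 X n = none then A (pi0 X) else B (pi1 X)

/-- The `Σ_T`-complete functions `Ω_T`, relative to a fixed `Σ⁰₂`-universal initializable
conciliatory function `𝒰`:
* `Ω_{⟨q⟩}` is the constant function with value `q` (equivalently `Ω_q ∘ 𝒰`);
* `Ω_{⟨S⟩} = Ω_S ∘ 𝒰`;
* `Ω_{⟨S⟩→F} = Ω_{⟨S⟩} → Ω_F`: the value is `Ω_{⟨S⟩}(π₀ X)` if no mind change occurs in `X`,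
  and `Ω_F(π₁ X)` otherwise (where `Ω_F(n⌢X') = Ω_{F_n}(X')`);
* `Ω_{⊔_n T_n}(n⌢X) = Ω_{T_n}(X)`. -/
def Omega {Q : Type u} (U : HatBaire → HatBaire) : Term Q → HatBaire → Q
  | .const q => fun _ => q
  | .jump _ T => fun X => Omega U T (U X)
  | .node B F => fun X =>
      if ∀ n, pi1 X n = none then Omega U B (pi0 X)
      else Omega U (F ((pi1 X 0).getD 0)) fun n => pi1 X (n + 1)
  | .sup F => fun X => Omega U (F ((X 0).getD 0)) fun n => X (n + 1)

/-- `Ω_T` as a function on `ω × ω̂^ω`: for a `⊔`-type term `⊔_n T_n` this is the function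
`(n, X) ↦ Ω_{T_n}(X)`; a tree is treated as a forest with a single (repeated) component,
i.e. `Ω_T` is composed with the (Wadge-irrelevant) projection. -/
def OmegaC {Q : Type u} (U : HatBaire → HatBaire) (T : Term Q) : ℕ × HatBaire → Q :=
  match T with
  | .sup F => fun p => Omega U (F p.1) p.2
  | t => fun p => Omega U t p.2

/-!
The countable join `⊕ₙ Bₙ` of Borel functions strictly below `A` is again Borel and bounds
every `Bₙ`, so `A` reduces to it by some continuous `θ`. The first output of `θ` is constant on
a cylinder around the all-pass sequence, so every input that starts with enough passes is sent
into one component `Bₙ`. Prefixing passes does not change the value of a conciliatory function,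
hence `A` already reduces to `Bₙ`, contradicting `Bₙ <_w A`.
-/

namespace SigmaZero

variable {X : Type*} [TopologicalSpace X] {ξ : Ordinal} {s : Set X}

theorem one_le (h : SigmaZero X ξ s) : 1 ≤ ξ := by
  cases h with
  | of_isOpen _ => exact le_rfl
  | iUnion hα _ _ _ _ => exact hα.le

theorem preimage {Y : Type*} [TopologicalSpace Y] (h : SigmaZero X ξ s) {f : Y → X}
    (hf : Continuous f) : SigmaZero Y ξ (f ⁻¹' s) := by
  induction h with
  | of_isOpen ho => exact .of_isOpen (ho.preimage hf)
  | iUnion hα _ β hβ _ ih =>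
    rw [Set.preimage_iUnion]
    exact .iUnion hα _ β hβ fun n => by rw [← Set.preimage_compl]; exact ih n

-- Both halves are proved together: the complement in the `iUnion` step swaps them.
theorem inter_and_union_of_isClopen (h : SigmaZero X ξ s) {U : Set X} (hU : IsClopen U) :
    SigmaZero X ξ (U ∩ s) ∧ SigmaZero X ξ (U ∪ s) := by
  induction h generalizing U with
  | of_isOpen ho => exact ⟨.of_isOpen (hU.isOpen.inter ho), .of_isOpen (hU.isOpen.union ho)⟩
  | iUnion hα _ β hβ _ ih =>
    refine ⟨?_, ?_⟩
    · rw [Set.inter_iUnion]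
      exact .iUnion hα _ β hβ fun n => by rw [Set.compl_inter]; exact (ih n hU.compl).2
    · rw [Set.union_iUnion]
      exact .iUnion hα _ β hβ fun n => by rw [Set.compl_union]; exact (ih n hU.compl).1

theorem setOf_tail_mem (hξ : 1 < ξ) {ξn : ℕ → Ordinal} (hξn : ∀ n, ξn n < ξ)
    {P : ℕ → Set Baire} (hP : ∀ n, PiZero Baire (ξn n) (P n)) :
    SigmaZero Baire ξ {X : Baire | (fun m => X (m + 1)) ∈ P (X 0)} := by
  have hcont : Continuous fun (X : Baire) (m : ℕ) => X (m + 1) :=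
    continuous_pi fun m => continuous_apply (m + 1)
  have hclopen (n : ℕ) : IsClopen {X : Baire | X 0 = n} :=
    (isClopen_discrete {n}).preimage (continuous_apply 0)
  have hunion : {X : Baire | (fun m => X (m + 1)) ∈ P (X 0)} =
      ⋃ n, {X : Baire | X 0 = n} ∩ (fun (X : Baire) (m : ℕ) => X (m + 1)) ⁻¹' P n := by
    ext X
    simp
  rw [hunion]
  refine .iUnion hξ _ ξn hξn fun n => ?_
  rw [Set.compl_inter, ← Set.preimage_compl]
  exact (((hP n).preimage hcont).inter_and_union_of_isClopen (hclopen n).compl).2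

end SigmaZero

theorem IsCountableOrd.iSup_add_one {ξ : ℕ → Ordinal.{0}} (h : ∀ n, IsCountableOrd (ξ n)) :
    IsCountableOrd (⨆ n, ξ n + 1) := by
  have hlt : ⨆ n, ξ n + 1 < (Cardinal.aleph 1).ord :=
    Ordinal.iSup_add_one_lt_of_lt_cof
      (by rw [Cardinal.isRegular_aleph_one.cof_ord, Cardinal.mk_nat]
          exact Cardinal.aleph0_lt_aleph_one)
      fun n => Cardinal.lt_ord.2 ((h n).trans_lt Cardinal.aleph0_lt_aleph_one)
  exact Cardinal.lt_aleph_one_iff.1 (Cardinal.lt_ord.1 hlt)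

section Join

variable {Q : Type*}

theorem BorelMeasurable.oplus {B : ℕ → Baire → Q} (hB : ∀ n, BorelMeasurable (B n)) :
    BorelMeasurable (oplus B) := by
  choose ξ hξ hB using hB
  have hlt := Ordinal.lt_iSup_add_one ξ
  have hone : 1 < ⨆ n, ξ n + 1 := ((hB 0).2 (B 0 0)).1.one_le.trans_lt (hlt 0)
  refine ⟨_, IsCountableOrd.iSup_add_one hξ, ?_, fun q => ⟨?_, ?_⟩⟩
  · refine (Set.countable_iUnion fun n => (hB n).1).mono ?_
    exact Set.range_subset_iff.2 fun X => Set.mem_iUnion.2 ⟨X 0, _, rfl⟩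
  · exact SigmaZero.setOf_tail_mem hone hlt fun n => ((hB n).2 q).2
  · refine SigmaZero.setOf_tail_mem (P := fun n => (B n ⁻¹' {q})ᶜ) hone hlt fun n => ?_
    rw [PiZero, compl_compl]
    exact ((hB n).2 q).1

variable [Preorder Q]

theorem wadgeLE_oplus (B : ℕ → Baire → Q) (n : ℕ) : WadgeLE (B n) (oplus B) := by
  refine ⟨fun X i => match i with | 0 => n | i + 1 => X i, ?_, fun X => le_rfl⟩
  refine continuous_pi fun i => ?_
  match i with
  | 0 => exact continuous_const
  | i + 1 => exact continuous_apply i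

end Join

theorem wadgeLE_comp_homeomorph_iff {X Y Z Q : Type*} [TopologicalSpace X] [TopologicalSpace Y]
    [TopologicalSpace Z] [Preorder Q] (e : X ≃ₜ Y) (A : Y → Q) (C : Z → Q) :
    WadgeLE (A ∘ e) C ↔ WadgeLE A C :=
  ⟨fun ⟨θ, hθ, h⟩ =>
      ⟨θ ∘ e.symm, hθ.comp e.symm.continuous, fun y => by simpa using h (e.symm y)⟩,
    fun ⟨θ, hθ, h⟩ => ⟨θ ∘ e, hθ.comp e.continuous, fun x => h (e x)⟩⟩

theorem exists_cylinder_subset_of_isOpen {E : ℕ → Type*} [∀ n, TopologicalSpace (E n)]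
    [∀ n, DiscreteTopology (E n)] {U : Set (∀ n, E n)} (hU : IsOpen U) {x : ∀ n, E n}
    (hx : x ∈ U) : ∃ k, PiNat.cylinder x k ⊆ U := by
  obtain ⟨_, ⟨y, k, rfl⟩, hxy, hsub⟩ :=
    (PiNat.isTopologicalBasis_cylinders E).exists_subset_of_mem_open hx hU
  exact ⟨k, PiNat.mem_cylinder_iff_eq.1 hxy ▸ hsub⟩

theorem dite_find_eq_map_succ {p q : ℕ → Prop} [DecidablePred p] [DecidablePred q]
    [Decidable (∃ n, p n)] [Decidable (∃ n, q n)] (h0 : ¬ p 0)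
    (hpq : ∀ n, p (n + 1) ↔ q n) :
    (if h : ∃ n, p n then some (Nat.find h) else none) =
      (if h : ∃ n, q n then some (Nat.find h) else none).map (· + 1) := by
  by_cases hq : ∃ n, q n
  · have hp : ∃ n, p n := ⟨_, (hpq _).2 (Nat.find_spec hq)⟩
    rw [dif_pos hp, dif_pos hq, Option.map_some, Option.some_inj, Nat.find_eq_iff]
    refine ⟨(hpq _).2 (Nat.find_spec hq), fun m hm => ?_⟩
    cases m with
    | zero => exact h0
    | succ m => exact fun hpm => Nat.find_min hq (by omega) ((hpq m).1 hpm)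
  · have hp : ¬ ∃ n, p n := by
      rintro ⟨_ | n, hn⟩
      exacts [h0 hn, hq ⟨n, (hpq n).1 hn⟩]
    rw [dif_neg hp, dif_neg hq, Option.map_none]

def consPass (X : HatBaire) : HatBaire
  | 0 => none
  | n + 1 => X n

theorem continuous_consPass : Continuous consPass :=
  continuous_pi fun n => match n with
    | 0 => continuous_const
    | m + 1 => continuous_apply m

theorem nthSome_consPass (X : HatBaire) (k : ℕ) :
    nthSome (consPass X) k = (nthSome X k).map (· + 1) := by
  induction k with
  | zero => exact dite_find_eq_map_succ (by simp [consPass]) fun _ => Iff.rfl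
  | succ k ih =>
    rw [nthSome.eq_2, nthSome.eq_2, ih]
    cases nthSome X k with
    | none => rfl
    | some i => exact dite_find_eq_map_succ (by simp [consPass]) fun j => by simp [consPass]

theorem strip_consPass (X : HatBaire) : strip (consPass X) = strip X := by
  apply Stream'.Seq.ext
  intro n
  show (nthSome (consPass X) n).bind _ = (nthSome X n).bind _
  rw [nthSome_consPass]
  cases nthSome X n <;> rfl

theorem strip_iterate_consPass (k : ℕ) (X : HatBaire) : strip (consPass^[k] X) = strip X := by
  induction k with
  | zero => rfl
  | succ k ih => rw [Function.iterate_succ_apply', strip_consPass, ih]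

theorem iterate_consPass_mem_cylinder (k : ℕ) (X : HatBaire) :
    consPass^[k] X ∈ PiNat.cylinder (fun _ => none) k := by
  induction k with
  | zero => simp
  | succ k ih =>
    intro i hi
    rw [Function.iterate_succ_apply']
    match i with
    | 0 => rfl
    | j + 1 => exact ih j (by omega)

theorem ConciliatoryQ.exists_wadgeLE_of_wadgeLE_oplus {Q : Type*} [Preorder Q]
    {A : HatBaire → Q} (hc : ConciliatoryQ A) {B : ℕ → Baire → Q}
    (h : WadgeLE A (oplus B)) :
    ∃ n, WadgeLE A (B n) := by
  obtain ⟨θ, hθ, hAθ⟩ := h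
  set allPass : HatBaire := fun _ => none
  have hopen : IsOpen {Y : HatBaire | θ Y 0 = θ allPass 0} :=
    (isOpen_discrete {θ allPass 0}).preimage ((continuous_apply 0).comp hθ)
  obtain ⟨k, hk⟩ := exists_cylinder_subset_of_isOpen hopen (x := allPass) rfl
  have hcomp (X : HatBaire) : θ (consPass^[k] X) 0 = θ allPass 0 :=
    hk (iterate_consPass_mem_cylinder k X)
  refine ⟨θ allPass 0, fun X m => θ (consPass^[k] X) (m + 1), ?_, fun X => ?_⟩
  · exact continuous_pi fun m =>
      (continuous_apply (m + 1)).comp (hθ.comp (continuous_consPass.iterate k))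
  calc A X = A (consPass^[k] X) := hc _ _ (strip_iterate_consPass k X).symm
    _ ≤ oplus B (θ (consPass^[k] X)) := hAθ _
    _ = B (θ allPass 0) fun m => θ (consPass^[k] X) (m + 1) := by rw [oplus, hcomp]

theorem conciliatory_is_sigma_join_irreducible_general (Q : Type u) [Preorder Q]
    (A : HatBaire → Q) (hc : ConciliatoryQ A) :
    ∀ e : Baire ≃ₜ HatBaire, ¬ SigmaJoinReducible fun X => A (e X) := by
  rintro e ⟨B, hBorel, hlt, hlub⟩
  have hjoin : WadgeLE (A ∘ e) (oplus B) :=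
    hlub _ (BorelMeasurable.oplus hBorel) (wadgeLE_oplus B)
  obtain ⟨n, hn⟩ :=
    hc.exists_wadgeLE_of_wadgeLE_oplus ((wadgeLE_comp_homeomorph_iff e A _).1 hjoin)
  exact (hlt n).2 ((wadgeLE_comp_homeomorph_iff e A _).2 hn)

/-- Let `Q` be a better-quasi-order.  Every Borel conciliatory function
`A : ω̂^ω → Q` is σ-join-irreducible, viewing `A` as a function on `ω^ω` via a homeomorphism
between `ω̂^ω` and `ω^ω`. -/
theorem conciliatory_is_sigma_join_irreducible (Q : Type u) [Preorder Q] (hQ : IsBQO Q)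
    (A : HatBaire → Q) (hA : BorelMeasurable A) (hc : ConciliatoryQ A) :
    ∀ e : Baire ≃ₜ HatBaire, ¬ SigmaJoinReducible fun X => A (e X) :=
  conciliatory_is_sigma_join_irreducible_general Q A hc

end WadgeStudy
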